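/- The map ψ : Y → X is a surjective local homeomorphism. -/

import Mathlib

noncomputable section

/-- The 2-sphere, realized as the unit sphere `{(c,z) : |c|² + z² = 1}` in `ℂ × ℝ`,
with the subspace topology. -/
def TwoSphere : Set (ℂ × ℝ) := {p | ‖p.1‖ ^ 2 + p.2 ^ 2 = 1}

/-- The relation `r₀` on `S²`: `r₀ (c,z) (c',z')` iff `z ≠ 0`, `c' = -c` and `z' = z`. -/
def sphRel (a b : TwoSphere) : Prop :=
  a.1.2 ≠ 0 ∧ b.1.1 = -a.1.1 ∧ b.1.2 = a.1.2

/-- The twisted sphere `X`: the quotient of `S²` by the equivalence relation generated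
by `r₀`, with the quotient topology. -/
abbrev TwistedSphere : Type := Quot (Relation.EqvGen sphRel)

/-- The quotient map `q : S² → X`. -/
abbrev sphQ : TwoSphere → TwistedSphere := Quot.mk (Relation.EqvGen sphRel)

/-- `V = S² ∖ E`: the points of the sphere whose `ℝ`-coordinate is nonzero
(the sphere minus the equator). -/
def sphV : Set TwoSphere := {p | p.1.2 ≠ 0}

/-- The (discontinuous) "angle halving" map `α : V → S²`,
`α(c,z) = (√|c| · c^{1/2}, z)` where `c^{1/2}` is the principal complex square root.
It fixes the two poles, where `c = 0`. -/
def sphAlpha (v : sphV) : TwoSphere :=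
  ⟨((Real.sqrt ‖v.1.1.1‖ : ℂ) * v.1.1.1 ^ (1/2 : ℂ), v.1.1.2), by
    obtain ⟨⟨⟨c, z⟩, hmem⟩, -⟩ := v
    simp only [TwoSphere, Set.mem_setOf_eq] at hmem ⊢
    have h1 : ‖(Real.sqrt ‖c‖ : ℂ) * c ^ (1/2 : ℂ)‖
        = ‖c‖ := by
      rw [norm_mul, Complex.norm_real, Real.norm_of_nonneg (Real.sqrt_nonneg _)]
      have h2 : (1/2 : ℂ) = ((1/2 : ℝ) : ℂ) := by norm_num
      rw [h2, Complex.norm_cpow_real, ← Real.sqrt_eq_rpow,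
        Real.mul_self_sqrt (norm_nonneg _)]
    rw [h1, hmem]⟩

/-- `U = S² ∖ {poles}`: the points of the sphere whose `ℂ`-coordinate is nonzero. -/
def sphU : Set TwoSphere := {p | p.1.1 ≠ 0}

/-- `Y = U ⊔ V ⊔ V`, the disjoint union of `U` and two copies of `V`, with the
disjoint-union topology. -/
abbrev sphY : Type := sphU ⊕ (sphV ⊕ sphV)

/-- The map `ψ : Y → X`, equal to `q` on the `U` summand and to `q ∘ α` on each of the
two copies of `V`. -/
def sphPsi : sphY → TwistedSphere :=
  Sum.elim (fun u => sphQ u.1)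
    (Sum.elim (fun v => sphQ (sphAlpha v)) (fun v => sphQ (sphAlpha v)))

/-!
On `U`, the quotient map `q` is open and injective on each half-space `Re (c̄₀ c) > 0`, hence a
local homeomorphism. On `V`, the map `q ∘ α` is continuous although `α` is not: `q` identifies the
two square roots of `|c| c`, and near any point one of them depends continuously on `c`. The
argument-doubling map `(c, z) ↦ (c² / |c|, z)` descends to `X` and is a continuous left inverse of
`q ∘ α`, so `q ∘ α` is an embedding, with open image `q(V)`. Since `U ∪ V` is the whole sphere,
`ψ` is onto.
-/

open Complex Filter Topology

section LocalHomeomorph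

variable {X Y Z : Type*} [TopologicalSpace X] [TopologicalSpace Y] [TopologicalSpace Z]

lemma IsLocalHomeomorph.of_isLocallyInjective {f : X → Y} (hc : Continuous f) (ho : IsOpenMap f)
    (hi : IsLocallyInjective f) : IsLocalHomeomorph f := by
  refine isLocalHomeomorph_iff_isOpenEmbedding_restrict.mpr fun x => ?_
  obtain ⟨U, hU, hxU, hinj⟩ := hi x
  exact ⟨U, hU.mem_nhds hxU, .of_continuous_injective_isOpenMap (hc.comp continuous_subtype_val)
    (Set.injOn_iff_injective.mp hinj) (ho.comp hU.isOpenMap_subtype_val)⟩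

lemma IsLocalHomeomorph.sumElim {f : X → Z} {g : Y → Z} (hf : IsLocalHomeomorph f)
    (hg : IsLocalHomeomorph g) : IsLocalHomeomorph (Sum.elim f g) := by
  refine .of_isLocallyInjective (hf.continuous.sumElim hg.continuous)
    (hf.isOpenMap.sumElim hg.isOpenMap) ?_
  rintro (x | y)
  · obtain ⟨U, hU, hxU, hinj⟩ := hf.isLocallyInjective x
    exact ⟨Sum.inl '' U, isOpenMap_inl U hU, Set.mem_image_of_mem _ hxU,
      Set.InjOn.image_of_comp (f := Sum.inl) (g := Sum.elim f g) hinj⟩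
  · obtain ⟨U, hU, hyU, hinj⟩ := hg.isLocallyInjective y
    exact ⟨Sum.inr '' U, isOpenMap_inr U hU, Set.mem_image_of_mem _ hyU,
      Set.InjOn.image_of_comp (f := Sum.inr) (g := Sum.elim f g) hinj⟩

end LocalHomeomorph

lemma tendsto_zero_of_norm_eq {E F : Type*} [SeminormedAddGroup E] [SeminormedAddGroup F]
    {f : E → F} (hf : ∀ x, ‖f x‖ = ‖x‖) : Tendsto f (𝓝 0) (𝓝 0) := by
  rw [tendsto_zero_iff_norm_tendsto_zero]
  simpa only [hf, norm_zero] using (continuous_norm (E := E)).tendsto 0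

/- `halfAngle` halves the argument of `c` and `doubleAngle` doubles it. -/
def halfAngle (c : ℂ) : ℂ := (Real.sqrt ‖c‖ : ℂ) * c ^ (1/2 : ℂ)

def doubleAngle (c : ℂ) : ℂ := c ^ 2 / (‖c‖ : ℂ)

@[simp] lemma halfAngle_zero : halfAngle 0 = 0 := by simp [halfAngle]

@[simp] lemma norm_halfAngle (c : ℂ) : ‖halfAngle c‖ = ‖c‖ := by
  rw [halfAngle, norm_mul, norm_real, Real.norm_of_nonneg (Real.sqrt_nonneg _),
    show (1/2 : ℂ) = ((1/2 : ℝ) : ℂ) by norm_num, norm_cpow_real, ← Real.sqrt_eq_rpow,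
    Real.mul_self_sqrt (norm_nonneg _)]

lemma halfAngle_sq (c : ℂ) : halfAngle c ^ 2 = ‖c‖ * c := by
  rw [halfAngle, mul_pow, ← ofReal_pow, Real.sq_sqrt (norm_nonneg _),
    show (1/2 : ℂ) = ((2 : ℕ) : ℂ)⁻¹ by norm_num, cpow_nat_inv_pow _ two_ne_zero]

@[simp] lemma norm_doubleAngle (c : ℂ) : ‖doubleAngle c‖ = ‖c‖ := by
  rcases eq_or_ne c 0 with rfl | hc
  · simp [doubleAngle]
  · rw [doubleAngle, norm_div, norm_pow, norm_real, Real.norm_of_nonneg (norm_nonneg _), sq,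
      mul_div_cancel_right₀ _ (norm_ne_zero_iff.mpr hc)]

lemma doubleAngle_neg (c : ℂ) : doubleAngle (-c) = doubleAngle c := by
  simp [doubleAngle]

lemma doubleAngle_halfAngle (c : ℂ) : doubleAngle (halfAngle c) = c := by
  rcases eq_or_ne c 0 with rfl | hc
  · simp [doubleAngle]
  · have : (‖c‖ : ℂ) ≠ 0 := ofReal_ne_zero.mpr (norm_ne_zero_iff.mpr hc)
    rw [doubleAngle, halfAngle_sq, norm_halfAngle, mul_div_cancel_left₀ _ this]

lemma halfAngle_doubleAngle_sq (c : ℂ) : halfAngle (doubleAngle c) ^ 2 = c ^ 2 := by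
  rcases eq_or_ne c 0 with rfl | hc
  · simp [doubleAngle]
  · have : (‖c‖ : ℂ) ≠ 0 := ofReal_ne_zero.mpr (norm_ne_zero_iff.mpr hc)
    rw [halfAngle_sq, norm_doubleAngle, doubleAngle, mul_div_cancel₀ _ this]

lemma continuous_doubleAngle : Continuous doubleAngle := by
  refine continuous_iff_continuousAt.mpr fun c => ?_
  rcases eq_or_ne c 0 with rfl | hc
  · simpa [ContinuousAt, doubleAngle] using tendsto_zero_of_norm_eq norm_doubleAngle
  · exact (continuous_pow 2).continuousAt.div (continuous_ofReal.comp continuous_norm).continuousAt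
      (ofReal_ne_zero.mpr (norm_ne_zero_iff.mpr hc))

lemma continuousAt_halfAngle_zero : ContinuousAt halfAngle 0 := by
  simpa [ContinuousAt] using tendsto_zero_of_norm_eq norm_halfAngle

lemma continuousAt_halfAngle {c : ℂ} (hc : c ∈ slitPlane) : ContinuousAt halfAngle c :=
  (continuous_ofReal.comp (Real.continuous_sqrt.comp continuous_norm)).continuousAt.mul
    (continuousAt_cpow_const hc)

section Sphere

lemma sph_ext {p p' : TwoSphere} (h₁ : p.1.1 = p'.1.1) (h₂ : p.1.2 = p'.1.2) : p = p' :=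
  Subtype.ext (Prod.ext h₁ h₂)

def sphMap (f : ℂ → ℂ) (hf : ∀ c, ‖f c‖ = ‖c‖) (p : TwoSphere) : TwoSphere :=
  ⟨(f p.1.1, p.1.2), by simpa [TwoSphere, hf] using p.2⟩

variable {f : ℂ → ℂ} {hf : ∀ c, ‖f c‖ = ‖c‖}

lemma continuousAt_sphMap {p : TwoSphere} (h : ContinuousAt f p.1.1) :
    ContinuousAt (sphMap f hf) p :=
  IsInducing.subtypeVal.continuousAt_iff.mpr <|
    (h.comp (f := fun p : TwoSphere => p.1.1) continuousAt_subtype_val.fst).prodMk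
      continuousAt_subtype_val.snd

lemma continuous_sphMap (h : Continuous f) : Continuous (sphMap f hf) :=
  continuous_iff_continuousAt.mpr fun _ => continuousAt_sphMap h.continuousAt

lemma isOpen_sphU : IsOpen sphU :=
  isOpen_compl_singleton.preimage (continuous_fst.comp continuous_subtype_val)

lemma isOpen_sphV : IsOpen sphV :=
  isOpen_compl_singleton.preimage (continuous_snd.comp continuous_subtype_val)

end Sphere

lemma equivalence_eq_or_sphRel : Equivalence fun a b : TwoSphere => a = b ∨ sphRel a b where
  refl _ := Or.inl rfl
  symm := by
    rintro a b (rfl | ⟨hz, hc, hz'⟩)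
    · exact Or.inl rfl
    · exact Or.inr ⟨hz' ▸ hz, by rw [hc, neg_neg], hz'.symm⟩
  trans := by
    rintro a b c (rfl | ⟨hz, hc, hz'⟩) (rfl | h)
    · exact Or.inl rfl
    · exact Or.inr h
    · exact Or.inr ⟨hz, hc, hz'⟩
    · obtain ⟨-, hc', hz''⟩ := h
      exact Or.inl (sph_ext (by rw [hc', hc, neg_neg]) (hz''.trans hz')).symm

lemma sphQ_eq_sphQ_iff {a b : TwoSphere} : sphQ a = sphQ b ↔ a = b ∨ sphRel a b := by
  refine ⟨fun h => equivalence_eq_or_sphRel.eqvGen_iff.mp ?_, ?_⟩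
  · exact ((Relation.EqvGen.is_equivalence _).eqvGen_iff.mp (Quot.eqvGen_exact h)).mono
      fun _ _ => Or.inr
  · rintro (rfl | h)
    · rfl
    · exact Quot.sound (.rel _ _ h)

lemma sphQ_eq_of_sq_eq {a b : TwoSphere} (ha : a.1.2 ≠ 0) (hsq : a.1.1 ^ 2 = b.1.1 ^ 2)
    (hz : a.1.2 = b.1.2) : sphQ a = sphQ b := by
  refine sphQ_eq_sphQ_iff.mpr ?_
  rcases sq_eq_sq_iff_eq_or_eq_neg.mp hsq with h | h
  · exact Or.inl (sph_ext h hz)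
  · exact Or.inr ⟨ha, h.symm ▸ (neg_neg _).symm, hz.symm⟩

lemma preimage_image_sphQ (W : Set TwoSphere) :
    sphQ ⁻¹' (sphQ '' W) = W ∪ (sphV ∩ sphMap Neg.neg norm_neg ⁻¹' W) := by
  ext p
  constructor
  · rintro ⟨w, hw, hwp⟩
    rcases sphQ_eq_sphQ_iff.mp hwp with rfl | ⟨hz, hc, hz'⟩
    · exact Or.inl hw
    · have hneg : sphMap Neg.neg norm_neg p = w := sph_ext (by simp [sphMap, hc]) hz'
      exact Or.inr ⟨show p.1.2 ≠ 0 from hz' ▸ hz, show sphMap _ _ p ∈ W from hneg ▸ hw⟩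
  · rintro (hp | ⟨hz, hw⟩)
    · exact ⟨p, hp, rfl⟩
    · exact ⟨_, hw, sphQ_eq_sphQ_iff.mpr (Or.inr ⟨hz, (neg_neg _).symm, rfl⟩)⟩

lemma isOpenMap_sphQ : IsOpenMap sphQ := fun W hW => by
  rw [← isQuotientMap_quot_mk.isOpen_preimage, preimage_image_sphQ]
  exact hW.union (isOpen_sphV.inter (hW.preimage (continuous_sphMap continuous_neg)))

def twistedDouble : TwistedSphere → TwoSphere :=
  Quot.lift (sphMap doubleAngle norm_doubleAngle) fun a b h => by
    rcases sphQ_eq_sphQ_iff.mp (Quot.sound h) with rfl | ⟨-, hc, hz⟩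
    · rfl
    · exact sph_ext (by simp [sphMap, hc, doubleAngle_neg]) hz.symm

lemma continuous_twistedDouble : Continuous twistedDouble :=
  continuous_quot_lift _ (continuous_sphMap continuous_doubleAngle)

lemma continuous_sphQ_comp_sphAlpha : Continuous (sphQ ∘ sphAlpha) := by
  have chart : ∀ {g : ℂ → ℂ} (hg : ∀ c, ‖g c‖ = ‖c‖) {v : sphV}, ContinuousAt g v.1.1.1 →
      ContinuousAt (sphQ ∘ sphMap g hg ∘ Subtype.val) v := fun _ _ h =>
    continuous_quot_mk.continuousAt.comp ((continuousAt_sphMap h).comp continuousAt_subtype_val)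
  refine continuous_iff_continuousAt.mpr fun v => ?_
  rcases eq_or_ne v.1.1.1 0 with h0 | h0
  · exact chart norm_halfAngle (h0 ▸ continuousAt_halfAngle_zero)
  rcases mem_slitPlane_or_neg_mem_slitPlane h0 with h | h
  · exact chart norm_halfAngle (continuousAt_halfAngle h)
  -- Off the slit plane, `q` cannot tell `halfAngle c` from the other square root
  -- `I * halfAngle (-c)` of `|c| c`, which is continuous there.
  have hg : ∀ c, ‖I * halfAngle (-c)‖ = ‖c‖ := by simp
  have hsame : sphQ ∘ sphAlpha = sphQ ∘ sphMap (fun c => I * halfAngle (-c)) hg ∘ Subtype.val :=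
    funext fun w => sphQ_eq_of_sq_eq w.2 (by
      change halfAngle _ ^ 2 = (I * halfAngle _) ^ 2
      rw [mul_pow, halfAngle_sq, halfAngle_sq, I_sq, norm_neg]
      ring) rfl
  rw [hsame]
  exact chart hg (continuousAt_const.mul ((continuousAt_halfAngle h).comp continuousAt_neg))

lemma twistedDouble_comp_sphQ_comp_sphAlpha : twistedDouble ∘ sphQ ∘ sphAlpha = Subtype.val :=
  funext fun _ => sph_ext (doubleAngle_halfAngle _) rfl

lemma range_sphQ_comp_sphAlpha : Set.range (sphQ ∘ sphAlpha) = sphQ '' sphV := by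
  ext x
  constructor
  · rintro ⟨v, rfl⟩
    exact ⟨sphAlpha v, v.2, rfl⟩
  · rintro ⟨p, hp, rfl⟩
    exact ⟨⟨sphMap doubleAngle norm_doubleAngle p, hp⟩,
      sphQ_eq_of_sq_eq hp (halfAngle_doubleAngle_sq _) rfl⟩

lemma isOpenEmbedding_sphQ_comp_sphAlpha : IsOpenEmbedding (sphQ ∘ sphAlpha) where
  toIsEmbedding := .of_comp continuous_sphQ_comp_sphAlpha continuous_twistedDouble
    (twistedDouble_comp_sphQ_comp_sphAlpha ▸ .subtypeVal)
  isOpen_range := range_sphQ_comp_sphAlpha ▸ isOpenMap_sphQ _ isOpen_sphV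

lemma isLocalHomeomorph_sphQ_comp_val : IsLocalHomeomorph (sphQ ∘ Subtype.val : sphU → _) := by
  refine .of_isLocallyInjective (continuous_quot_mk.comp continuous_subtype_val)
    (isOpenMap_sphQ.comp isOpen_sphU.isOpenMap_subtype_val) fun u₀ => ?_
  -- The half-plane `Re (c̄₀ c) > 0` contains `c₀` but never both `c` and `-c`.
  refine ⟨{u | 0 < (starRingEnd ℂ u₀.1.1.1 * u.1.1.1).re},
    isOpen_lt continuous_const (by fun_prop), ?_, ?_⟩
  · change 0 < (starRingEnd ℂ _ * _).re
    rw [mul_comm, mul_conj, ofReal_re]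
    exact normSq_pos.mpr u₀.2
  · intro u hu u' hu' h
    rcases sphQ_eq_sphQ_iff.mp h with h | ⟨-, hc, -⟩
    · exact Subtype.ext h
    · simp only [Set.mem_ofPred_eq, hc, mul_neg, neg_re] at hu hu'
      linarith

/-- `ψ : Y → X` is a surjective local homeomorphism. -/
theorem stmt_11 :
    Function.Surjective sphPsi ∧ IsLocalHomeomorph sphPsi := by
  have hV := isOpenEmbedding_sphQ_comp_sphAlpha.isLocalHomeomorph
  refine ⟨?_, isLocalHomeomorph_sphQ_comp_val.sumElim (hV.sumElim hV)⟩
  rintro ⟨p⟩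
  by_cases hz : p.1.2 = 0
  · refine ⟨.inl ⟨p, fun hc => ?_⟩, rfl⟩
    simpa [TwoSphere, hc, hz] using p.2
  · obtain ⟨v, hv⟩ : sphQ p ∈ Set.range (sphQ ∘ sphAlpha) :=
      range_sphQ_comp_sphAlpha ▸ Set.mem_image_of_mem sphQ hz
    exact ⟨.inr (.inl v), hv⟩
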